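/- (Extremum inequalities, first-order bound.) Let a > 0, c > 0 and σ ≤ μ < 0. Let u be a solution of the SDDE, let M ∈ [M₀, 0) and N > 0, set τ = a + c·N, and suppose t* > 2τ satisfies u(s) ∈ [M, N] for all s ∈ [t* − 2τ, t*] and u'(t*) = 0. Set v = u(t*). Then: if v < 0 then Q₁(v, N) ≥ 0, and if v > 0 then Q₁(v, M) ≤ 0. -/

import Mathlib

/-!
At a critical point `t*` the equation gives `σ u(t₀) = -μ v` for the delayed time
`t₀ = t* - a - c v`, and `t₀ ∈ [t* - τ, t*]`. On `[t₀, t*]` all delayed arguments stay in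
`[t* - 2τ, t*]`, so the forcing term `σ u(s - a - c u(s))` lies between `σ N` and `σ M`.
Comparing the variation-of-constants quantity `e^{-μ s} (u(s) + σ x / μ)` at `t₀` and `t*`
(it is monotone for `x = N`, antitone for `x = M`): the difference of the two values is
exactly `e^{-μ t*} Q₁(v, x)`.
-/

open Real Set Filter

/-- `M₀ = -a/c`. -/
noncomputable def Mzero (a c : ℝ) : ℝ := -a / c

/-- `N₀ = aσ/(cμ)`. -/
noncomputable def Nzero (a c μ σ : ℝ) : ℝ := a * σ / (c * μ)

/-- A solution of the SDDE `u'(t) = μ u(t) + σ u(t - a - c u(t))` with history `φ`: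
a continuous function equal to `φ` on `(-∞,0]`, differentiable on `(0,∞)` with
continuous derivative there, satisfying the SDDE for all `t > 0`. -/
def IsSDDESolution (a c μ σ : ℝ) (φ u : ℝ → ℝ) : Prop :=
  Continuous u ∧ (∀ t ≤ (0:ℝ), u t = φ t) ∧
  ContinuousOn (deriv u) (Set.Ioi (0:ℝ)) ∧
  ∀ t > (0:ℝ), HasDerivAt u (μ * u t + σ * u (t - a - c * u t)) t

/-- `Q₁(v,x) = (1 + (μ/σ) e^{μ(a+cv)}) v + (σ/μ) x (1 - e^{μ(a+cv)})`. -/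
noncomputable def Qone (a c μ σ v x : ℝ) : ℝ :=
  (1 + (μ / σ) * Real.exp (μ * (a + c * v))) * v +
    (σ / μ) * x * (1 - Real.exp (μ * (a + c * v)))

section VariationOfConstants

variable {u f : ℝ → ℝ} {μ b t₀ t₁ : ℝ}

theorem hasDerivAt_exp_mul_add_div (hμ : μ ≠ 0) {s y : ℝ} (hu : HasDerivAt u (μ * u s + y) s) :
    HasDerivAt (fun t => exp (-μ * t) * (u t + b / μ)) (exp (-μ * s) * (y - b)) s := by
  have hexp : HasDerivAt (fun t => exp (-μ * t)) (exp (-μ * s) * -μ) s := by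
    simpa using ((hasDerivAt_id s).const_mul (-μ)).exp
  refine (hexp.mul (hu.add_const (b / μ))).congr_deriv ?_
  field_simp
  ring

theorem monotoneOn_exp_mul_add_div (hμ : μ ≠ 0)
    (hu : ∀ s ∈ Icc t₀ t₁, HasDerivAt u (μ * u s + f s) s) (hf : ∀ s ∈ Icc t₀ t₁, b ≤ f s) :
    MonotoneOn (fun t => exp (-μ * t) * (u t + b / μ)) (Icc t₀ t₁) := by
  have hderiv s (hs : s ∈ Icc t₀ t₁) := hasDerivAt_exp_mul_add_div (b := b) hμ (hu s hs)
  refine monotoneOn_of_hasDerivWithinAt_nonneg (convex_Icc _ _)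
    (fun s hs => (hderiv s hs).continuousAt.continuousWithinAt)
    (fun s hs => (hderiv s (interior_subset hs)).hasDerivWithinAt) fun s hs => ?_
  exact mul_nonneg (exp_pos _).le (sub_nonneg.2 (hf s (interior_subset hs)))

theorem antitoneOn_exp_mul_add_div (hμ : μ ≠ 0)
    (hu : ∀ s ∈ Icc t₀ t₁, HasDerivAt u (μ * u s + f s) s) (hf : ∀ s ∈ Icc t₀ t₁, f s ≤ b) :
    AntitoneOn (fun t => exp (-μ * t) * (u t + b / μ)) (Icc t₀ t₁) := by
  have hderiv s (hs : s ∈ Icc t₀ t₁) := hasDerivAt_exp_mul_add_div (b := b) hμ (hu s hs)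
  refine antitoneOn_of_hasDerivWithinAt_nonpos (convex_Icc _ _)
    (fun s hs => (hderiv s hs).continuousAt.continuousWithinAt)
    (fun s hs => (hderiv s (interior_subset hs)).hasDerivWithinAt) fun s hs => ?_
  exact mul_nonpos_of_nonneg_of_nonpos (exp_pos _).le (sub_nonpos.2 (hf s (interior_subset hs)))

end VariationOfConstants

section SDDE

variable {a c M N : ℝ}

theorem delay_mem_Icc (hc : 0 < c) (hM : Mzero a c ≤ M) {x : ℝ} (hx : x ∈ Icc M N) :
    a + c * x ∈ Icc 0 (a + c * N) := by
  have haM : 0 ≤ a + c * M := by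
    rw [Mzero, div_le_iff₀ hc] at hM
    linarith
  exact ⟨by nlinarith [hx.1], by nlinarith [hx.2]⟩

theorem exp_mul_Qone (μ σ t v x : ℝ) :
    exp (-μ * t) * Qone a c μ σ v x =
      exp (-μ * t) * (v + σ * x / μ) -
        exp (-μ * (t - a - c * v)) * (-(μ * v) / σ + σ * x / μ) := by
  have hsplit : exp (-μ * (t - a - c * v)) = exp (-μ * t) * exp (μ * (a + c * v)) := by
    rw [← exp_add]
    ring_nf
  rw [hsplit, Qone]
  ring

variable {μ σ t x : ℝ} {u : ℝ → ℝ}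

theorem Qone_nonneg_of_delayed_le (hμ : μ ≠ 0) (hσ : σ < 0) (hle : t - a - c * u t ≤ t)
    (hode : ∀ s ∈ Icc (t - a - c * u t) t, HasDerivAt u (μ * u s + σ * u (s - a - c * u s)) s)
    (hcrit : σ * u (t - a - c * u t) = -(μ * u t))
    (hx : ∀ s ∈ Icc (t - a - c * u t) t, u (s - a - c * u s) ≤ x) :
    0 ≤ Qone a c μ σ (u t) x := by
  have hu₀ : -(μ * u t) / σ = u (t - a - c * u t) := by
    rw [← hcrit, mul_div_cancel_left₀ _ hσ.ne]
  have hmono := monotoneOn_exp_mul_add_div (b := σ * x) hμ hode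
    (fun s hs => mul_le_mul_of_nonpos_left (hx s hs) hσ.le) (left_mem_Icc.2 hle)
    (right_mem_Icc.2 hle) hle
  refine le_of_mul_le_mul_left ?_ (exp_pos (-μ * t))
  rw [mul_zero, exp_mul_Qone, hu₀]
  exact sub_nonneg.2 hmono

theorem Qone_nonpos_of_le_delayed (hμ : μ ≠ 0) (hσ : σ < 0) (hle : t - a - c * u t ≤ t)
    (hode : ∀ s ∈ Icc (t - a - c * u t) t, HasDerivAt u (μ * u s + σ * u (s - a - c * u s)) s)
    (hcrit : σ * u (t - a - c * u t) = -(μ * u t))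
    (hx : ∀ s ∈ Icc (t - a - c * u t) t, x ≤ u (s - a - c * u s)) :
    Qone a c μ σ (u t) x ≤ 0 := by
  have hu₀ : -(μ * u t) / σ = u (t - a - c * u t) := by
    rw [← hcrit, mul_div_cancel_left₀ _ hσ.ne]
  have hanti := antitoneOn_exp_mul_add_div (b := σ * x) hμ hode
    (fun s hs => mul_le_mul_of_nonpos_left (hx s hs) hσ.le) (left_mem_Icc.2 hle)
    (right_mem_Icc.2 hle) hle
  refine le_of_mul_le_mul_left ?_ (exp_pos (-μ * t))
  rw [mul_zero, exp_mul_Qone, hu₀]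
  exact sub_nonpos.2 hanti

end SDDE

theorem sdde_extremum_Q1_general
    (a c μ σ M N τ : ℝ) (φ u : ℝ → ℝ) (tstar : ℝ)
    (hc : 0 < c) (hσμ : σ ≤ μ) (hμ : μ < 0)
    (hu : IsSDDESolution a c μ σ φ u)
    (hM : M ∈ Set.Ico (Mzero a c) (0:ℝ)) (hN : 0 < N) (hτ : τ = a + c * N)
    (ht : 2 * τ < tstar)
    (hbd : ∀ s ∈ Set.Icc (tstar - 2 * τ) tstar, u s ∈ Set.Icc M N)
    (hderiv : deriv u tstar = 0) :
    (u tstar < 0 → 0 ≤ Qone a c μ σ (u tstar) N) ∧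
      (0 < u tstar → Qone a c μ σ (u tstar) M ≤ 0) := by
  obtain ⟨-, -, -, hode⟩ := hu
  have hσ : σ < 0 := hσμ.trans_lt hμ
  have hdelay {x : ℝ} (hx : x ∈ Icc M N) : a + c * x ∈ Icc 0 τ := hτ ▸ delay_mem_Icc hc hM.1 hx
  have hτ0 : 0 ≤ τ := by linarith [(hdelay ⟨(hM.2.trans hN).le, le_rfl⟩).1]
  have hv := hdelay (hbd tstar ⟨by linarith, le_rfl⟩)
  have hle : tstar - a - c * u tstar ≤ tstar := by linarith [hv.1]
  have hpos : 0 < tstar - a - c * u tstar := by linarith [hv.2]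
  have hdelayed : ∀ s ∈ Icc (tstar - a - c * u tstar) tstar, u (s - a - c * u s) ∈ Icc M N :=
    fun s hs => by
      have hs' := hdelay (hbd s ⟨by linarith [hs.1, hv.2], hs.2⟩)
      exact hbd _ ⟨by linarith [hs.1, hs'.2, hv.2], by linarith [hs.2, hs'.1]⟩
  have hode' : ∀ s ∈ Icc (tstar - a - c * u tstar) tstar,
      HasDerivAt u (μ * u s + σ * u (s - a - c * u s)) s :=
    fun s hs => hode s (hpos.trans_le hs.1)
  have hcrit : σ * u (tstar - a - c * u tstar) = -(μ * u tstar) := by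
    have := (hode tstar (hpos.trans_le hle)).deriv
    rw [hderiv] at this
    linarith
  exact ⟨fun _ => Qone_nonneg_of_delayed_le hμ.ne hσ hle hode' hcrit fun s hs => (hdelayed s hs).2,
    fun _ => Qone_nonpos_of_le_delayed hμ.ne hσ hle hode' hcrit fun s hs => (hdelayed s hs).1⟩

/-- Extremum inequalities, first-order bound. -/
theorem sdde_extremum_Q1
    (a c μ σ M N τ : ℝ) (φ u : ℝ → ℝ) (tstar : ℝ)
    (ha : 0 < a) (hc : 0 < c) (hσμ : σ ≤ μ) (hμ : μ < 0)
    (hu : IsSDDESolution a c μ σ φ u)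
    (hM : M ∈ Set.Ico (Mzero a c) (0:ℝ)) (hN : 0 < N) (hτ : τ = a + c * N)
    (ht : 2 * τ < tstar)
    (hbd : ∀ s ∈ Set.Icc (tstar - 2 * τ) tstar, u s ∈ Set.Icc M N)
    (hderiv : deriv u tstar = 0) :
    (u tstar < 0 → 0 ≤ Qone a c μ σ (u tstar) N) ∧
      (0 < u tstar → Qone a c μ σ (u tstar) M ≤ 0) :=
  sdde_extremum_Q1_general a c μ σ M N τ φ u tstar hc hσμ hμ hu hM hN hτ ht hbd hderiv
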